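/- Contraction fuses Majorana dimers and multiplies their parities: let N ≥ 3, χ ∈ H_N, and let ω := (id_{H_{N−2}} ⊗ β)(χ) ∈ H_{N−2} be the contraction of the last two qubits of χ, where β(|ab⟩) = δ_{a0}δ_{b0} + δ_{a1}δ_{b1}. Let γ (resp. γ′) denote the Jordan–Wigner Majorana operators on H_N (resp. H_{N−2}), and let p, q ∈ {−1,+1}. Then: (i) if (γ_j + i p γ_k)χ = 0 with j < k ≤ 2N−4, then (γ′_j + i p γ′_k)ω = 0; (ii) if (γ_a + i p γ_{2N})χ = 0 and (γ_b + i q γ_{2N−3})χ = 0 with a < b ≤ 2N−4, then (γ′_a + i p q γ′_b)ω = 0; (iii) if (γ_c + i p γ_{2N−1})χ = 0 and (γ_d + i q γ_{2N−2})χ = 0 with c < d ≤ 2N−4, then (γ′_c + i p q γ′_d)ω = 0. -/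
import Mathlib


open Complex Matrix

noncomputable section

/-- Computational basis labels for `L` qubits: bit strings `b : Fin L → Fin 2`. -/
abbrev QBasis (L : ℕ) := Fin L → Fin 2

/-- State vectors of `L` qubits (the Hilbert space `H_L = (ℂ²)^{⊗L}`
in its computational basis coordinates). -/
abbrev QVec (L : ℕ) := QBasis L → ℂ

/-- Operators on `L` qubits, written as matrices in the computational basis. -/
abbrev QOp (L : ℕ) := Matrix (QBasis L) (QBasis L) ℂ

/-- The inner product `⟨φ, ψ⟩`, conjugate-linear in the first argument. -/
def qInner {L : ℕ} (φ ψ : QVec L) : ℂ := ∑ b, (starRingEnd ℂ) (φ b) * ψ b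

/-- `+1` for bit `0`, `-1` for bit `1`. -/
def bitSign (x : Fin 2) : ℂ := if x = 0 then 1 else -1

/-- Flip the `k`-th bit of a bit string. -/
def flipBit {L : ℕ} (k : Fin L) (b : QBasis L) : QBasis L :=
  Function.update b k (1 - b k)

/-- Pauli `X` on the (1-based) site `k`; the identity if `k` is out of range. -/
def siteX (L : ℕ) (k : ℕ) : QOp L :=
  if h : 1 ≤ k ∧ k ≤ L then
    Matrix.of fun b c => if c = flipBit ⟨k - 1, by omega⟩ b then 1 else 0
  else 1

/-- Pauli `Y` on the (1-based) site `k`; the identity if `k` is out of range. -/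
def siteY (L : ℕ) (k : ℕ) : QOp L :=
  if h : 1 ≤ k ∧ k ≤ L then
    Matrix.of fun b c =>
      if c = flipBit ⟨k - 1, by omega⟩ b then -Complex.I * bitSign (b ⟨k - 1, by omega⟩)
      else 0
  else 1

/-- Pauli `Z` on the (1-based) site `k`; the identity if `k` is out of range. -/
def siteZ (L : ℕ) (k : ℕ) : QOp L :=
  if h : 1 ≤ k ∧ k ≤ L then
    Matrix.diagonal fun b => bitSign (b ⟨k - 1, by omega⟩)
  else 1

/-- The ordered operator product `f 1 * f 2 * ⋯ * f n`. -/
def opProd (L : ℕ) (f : ℕ → QOp L) (n : ℕ) : QOp L :=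
  ((List.range n).map fun i => f (i + 1)).prod

/-- The Jordan–Wigner Majorana operator `γ_m` (1-based, `1 ≤ m ≤ 2L`):
`γ_{2k-1} = Z_1 ⋯ Z_{k-1} X_k` and `γ_{2k} = Z_1 ⋯ Z_{k-1} Y_k`. -/
def majorana (L : ℕ) (m : ℕ) : QOp L :=
  opProd L (siteZ L) ((m + 1) / 2 - 1) *
    (if m % 2 = 1 then siteX L ((m + 1) / 2) else siteY L ((m + 1) / 2))

/-- The total parity operator `P = Z_1 Z_2 ⋯ Z_L`. -/
def totalParity (L : ℕ) : QOp L := opProd L (siteZ L) L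


/-- Extend a bit string on `N - 2` qubits by the two last bits `x`, `y`. -/
def appendTwo (N : ℕ) (b : QBasis (N - 2)) (x y : Fin 2) : QBasis N :=
  fun j => if h : (j : ℕ) < N - 2 then b ⟨(j : ℕ), h⟩
    else if (j : ℕ) = N - 2 then x else y

/-- The contraction of the last two qubits of `χ`: the vector
`ω = (id ⊗ β)(χ)` with `β = ⟨00| + ⟨11|`, i.e.
`ω(b) = χ(b,0,0) + χ(b,1,1)`. -/
def contractLast (N : ℕ) (χ : QVec N) : QVec (N - 2) :=
  fun b => χ (appendTwo N b 0 0) + χ (appendTwo N b 1 1)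

-- auxiliary
def dsign (L n : ℕ) (b : QBasis L) : ℂ :=
  ∏ i ∈ Finset.range n, if h : i < L then bitSign (b ⟨i, h⟩) else 1

lemma opProd_succ (L : ℕ) (f : ℕ → QOp L) (n : ℕ) :
    opProd L f (n + 1) = opProd L f n * f (n + 1) := by
  unfold opProd
  rw [List.range_succ, List.map_append, List.prod_append]
  simp

lemma opProd_siteZ (L n : ℕ) (hn : n ≤ L) :
    opProd L (siteZ L) n = Matrix.diagonal (dsign L n) := by
  induction n with
  | zero =>
    have h0 : dsign L 0 = fun _ => (1 : ℂ) := by funext b; simp [dsign]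
    rw [h0]
    simp [opProd, Matrix.diagonal_one]
  | succ n ih =>
    rw [opProd_succ, ih (by omega)]
    rw [siteZ, dif_pos (by omega : 1 ≤ n + 1 ∧ n + 1 ≤ L)]
    rw [Matrix.diagonal_mul_diagonal]
    refine congrArg Matrix.diagonal (funext fun b => ?_)
    unfold dsign
    rw [Finset.prod_range_succ, dif_pos (by omega : n < L)]
    norm_num

lemma siteX_mulVec (L k : ℕ) (h1 : 1 ≤ k) (h2 : k ≤ L) (v : QVec L) :
    siteX L k *ᵥ v = fun b => v (flipBit ⟨k - 1, by omega⟩ b) := by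
  funext b
  rw [siteX, dif_pos ⟨h1, h2⟩]
  simp [Matrix.mulVec, dotProduct]

lemma siteY_mulVec (L k : ℕ) (h1 : 1 ≤ k) (h2 : k ≤ L) (v : QVec L) :
    siteY L k *ᵥ v = fun b =>
      -Complex.I * bitSign (b ⟨k - 1, by omega⟩) * v (flipBit ⟨k - 1, by omega⟩ b) := by
  funext b
  rw [siteY, dif_pos ⟨h1, h2⟩]
  simp [Matrix.mulVec, dotProduct]

lemma maj_odd_mulVec (L k : ℕ) (h1 : 1 ≤ k) (h2 : k ≤ L) (v : QVec L) :
    majorana L (2 * k - 1) *ᵥ v =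
      fun b => dsign L (k - 1) b * v (flipBit ⟨k - 1, by omega⟩ b) := by
  have e1 : (2 * k - 1 + 1) / 2 = k := by omega
  have e2 : (2 * k - 1) % 2 = 1 := by omega
  rw [majorana, e1, e2, if_pos rfl, ← Matrix.mulVec_mulVec,
    siteX_mulVec L k h1 h2, opProd_siteZ L (k - 1) (by omega)]
  funext b
  rw [Matrix.mulVec_diagonal]

lemma maj_even_mulVec (L k : ℕ) (h1 : 1 ≤ k) (h2 : k ≤ L) (v : QVec L) :
    majorana L (2 * k) *ᵥ v =
      fun b => dsign L (k - 1) b *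
        (-Complex.I * bitSign (b ⟨k - 1, by omega⟩) * v (flipBit ⟨k - 1, by omega⟩ b)) := by
  have e1 : (2 * k + 1) / 2 = k := by omega
  rw [majorana, e1, if_neg (by omega : ¬ (2 * k) % 2 = 1), ← Matrix.mulVec_mulVec,
    siteY_mulVec L k h1 h2, opProd_siteZ L (k - 1) (by omega)]
  funext b
  rw [Matrix.mulVec_diagonal]

lemma appendTwo_lt (N : ℕ) (b : QBasis (N - 2)) (x y : Fin 2) (i : ℕ) (hi : i < N - 2)
    (h : i < N) : appendTwo N b x y ⟨i, h⟩ = b ⟨i, hi⟩ := by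
  simp [appendTwo, hi]

lemma appendTwo_mid (N : ℕ) (hN : 3 ≤ N) (b : QBasis (N - 2)) (x y : Fin 2) :
    appendTwo N b x y ⟨N - 2, by omega⟩ = x := by
  simp [appendTwo]

lemma appendTwo_last (N : ℕ) (hN : 3 ≤ N) (b : QBasis (N - 2)) (x y : Fin 2) :
    appendTwo N b x y ⟨N - 1, by omega⟩ = y := by
  have h1 : ¬ (N - 1 < N - 2) := by omega
  have h2 : ¬ (N - 1 = N - 2) := by omega
  simp [appendTwo, h1, h2]

lemma flip_appendTwo (N : ℕ) (b : QBasis (N - 2)) (x y : Fin 2) (i : ℕ)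
    (hi : i < N - 2) (h : i < N) :
    flipBit ⟨i, h⟩ (appendTwo N b x y) = appendTwo N (flipBit ⟨i, hi⟩ b) x y := by
  funext j
  unfold flipBit
  rcases eq_or_ne j ⟨i, h⟩ with hj | hj
  · subst hj
    rw [Function.update_self]
    rw [appendTwo_lt N b x y i hi h]
    have : appendTwo N (Function.update b ⟨i, hi⟩ (1 - b ⟨i, hi⟩)) x y ⟨i, h⟩
        = Function.update b ⟨i, hi⟩ (1 - b ⟨i, hi⟩) ⟨i, hi⟩ :=
      appendTwo_lt N _ x y i hi h
    rw [this, Function.update_self]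
  · rw [Function.update_of_ne hj]
    unfold appendTwo
    by_cases hjlt : (j : ℕ) < N - 2
    · simp only [dif_pos hjlt]
      rw [Function.update_of_ne]
      intro hcon
      apply hj
      apply Fin.ext
      simpa using congrArg Fin.val hcon
    · simp only [dif_neg hjlt]

lemma flip_appendTwo_mid (N : ℕ) (hN : 3 ≤ N) (b : QBasis (N - 2)) (x y : Fin 2) :
    flipBit ⟨N - 2, by omega⟩ (appendTwo N b x y) = appendTwo N b (1 - x) y := by
  funext j
  unfold flipBit
  rcases eq_or_ne j ⟨N - 2, by omega⟩ with hj | hj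
  · subst hj
    rw [Function.update_self, appendTwo_mid N hN, appendTwo_mid N hN]
  · rw [Function.update_of_ne hj]
    unfold appendTwo
    have hne : (j : ℕ) ≠ N - 2 := fun hcon => hj (Fin.ext hcon)
    by_cases hjlt : (j : ℕ) < N - 2
    · simp only [dif_pos hjlt]
    · simp only [dif_neg hjlt, if_neg hne]

lemma flip_appendTwo_last (N : ℕ) (hN : 3 ≤ N) (b : QBasis (N - 2)) (x y : Fin 2) :
    flipBit ⟨N - 1, by omega⟩ (appendTwo N b x y) = appendTwo N b x (1 - y) := by
  funext j
  unfold flipBit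
  rcases eq_or_ne j ⟨N - 1, by omega⟩ with hj | hj
  · subst hj
    rw [Function.update_self, appendTwo_last N hN, appendTwo_last N hN]
  · rw [Function.update_of_ne hj]
    unfold appendTwo
    have hne : (j : ℕ) ≠ N - 1 := fun hcon => hj (Fin.ext hcon)
    by_cases hjlt : (j : ℕ) < N - 2
    · simp only [dif_pos hjlt]
    · have : (j : ℕ) = N - 2 ∨ (j : ℕ) = N - 1 := by omega
      rcases this with h2 | h2
      · simp only [dif_neg hjlt, if_pos h2]
      · exact absurd h2 hne

lemma dsign_appendTwo (N n : ℕ) (hn : n ≤ N - 2) (b : QBasis (N - 2)) (x y : Fin 2) :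
    dsign N n (appendTwo N b x y) = dsign (N - 2) n b := by
  unfold dsign
  refine Finset.prod_congr rfl fun i hi => ?_
  have hi2 : i < N - 2 := lt_of_lt_of_le (Finset.mem_range.mp hi) hn
  have hiN : i < N := by omega
  rw [dif_pos hiN, dif_pos hi2, appendTwo_lt N b x y i hi2 hiN]

lemma dsign_appendTwo_succ (N : ℕ) (hN : 3 ≤ N) (b : QBasis (N - 2)) (x y : Fin 2) :
    dsign N (N - 1) (appendTwo N b x y) = dsign (N - 2) (N - 2) b * bitSign x := by
  unfold dsign
  have : N - 1 = (N - 2) + 1 := by omega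
  rw [this, Finset.prod_range_succ, dif_pos (by omega : N - 2 < N)]
  rw [appendTwo_mid N hN]
  congr 1
  refine Finset.prod_congr rfl fun i hi => ?_
  have hi2 : i < N - 2 := Finset.mem_range.mp hi
  have hiN : i < N := by omega
  rw [dif_pos hiN, dif_pos hi2, appendTwo_lt N b x y i hi2 hiN]

lemma contract_add (N : ℕ) (u v : QVec N) :
    contractLast N (u + v) = contractLast N u + contractLast N v := by
  funext b; simp [contractLast]; ring

lemma contract_smul (N : ℕ) (c : ℂ) (v : QVec N) :
    contractLast N (c • v) = c • contractLast N v := by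
  funext b; simp [contractLast]; ring

lemma contract_zero (N : ℕ) : contractLast N (0 : QVec N) = 0 := by
  funext b; simp [contractLast]

lemma contract_neg (N : ℕ) (v : QVec N) :
    contractLast N (-v) = -contractLast N v := by
  funext b; simp [contractLast]; ring

lemma maj_odd_mulVec' (L k i : ℕ) (h1 : 1 ≤ k) (h2 : k ≤ L) (hi : i = k - 1) (v : QVec L) :
    majorana L (2 * k - 1) *ᵥ v =
      fun b => dsign L i b * v (flipBit ⟨i, by omega⟩ b) := by
  subst hi; exact maj_odd_mulVec L k h1 h2 v

lemma maj_even_mulVec' (L k i : ℕ) (h1 : 1 ≤ k) (h2 : k ≤ L) (hi : i = k - 1) (v : QVec L) :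
    majorana L (2 * k) *ᵥ v =
      fun b => dsign L i b *
        (-Complex.I * bitSign (b ⟨i, by omega⟩) * v (flipBit ⟨i, by omega⟩ b)) := by
  subst hi; exact maj_even_mulVec L k h1 h2 v

lemma maj_contract_comm (N m : ℕ) (hN : 3 ≤ N) (hm1 : 1 ≤ m) (hm : m ≤ 2 * (N - 2))
    (χ : QVec N) :
    majorana (N - 2) m *ᵥ contractLast N χ = contractLast N (majorana N m *ᵥ χ) := by
  rcases Nat.even_or_odd m with he | ho
  · obtain ⟨k, hk⟩ := he
    have hm' : m = 2 * k := by omega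
    subst hm'
    have hk1 : 1 ≤ k := by omega
    rw [maj_even_mulVec' (N - 2) k (k - 1) hk1 (by omega) rfl,
        maj_even_mulVec' N k (k - 1) hk1 (by omega) rfl]
    funext b
    simp only [contractLast]
    rw [flip_appendTwo N b 0 0 (k - 1) (by omega) (by omega),
        flip_appendTwo N b 1 1 (k - 1) (by omega) (by omega),
        dsign_appendTwo N (k - 1) (by omega) b 0 0,
        dsign_appendTwo N (k - 1) (by omega) b 1 1,
        appendTwo_lt N b 0 0 (k - 1) (by omega) (by omega),
        appendTwo_lt N b 1 1 (k - 1) (by omega) (by omega)]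
    ring
  · obtain ⟨k', hk⟩ := ho
    have hm' : m = 2 * (k' + 1) - 1 := by omega
    subst hm'
    set k := k' + 1
    have hk1 : 1 ≤ k := by omega
    rw [maj_odd_mulVec' (N - 2) k (k - 1) hk1 (by omega) rfl,
        maj_odd_mulVec' N k (k - 1) hk1 (by omega) rfl]
    funext b
    simp only [contractLast]
    rw [flip_appendTwo N b 0 0 (k - 1) (by omega) (by omega),
        flip_appendTwo N b 1 1 (k - 1) (by omega) (by omega),
        dsign_appendTwo N (k - 1) (by omega) b 0 0,
        dsign_appendTwo N (k - 1) (by omega) b 1 1]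
    ring

lemma fuse_Y (N : ℕ) (hN : 3 ≤ N) (χ : QVec N) :
    contractLast N (majorana N (2 * N) *ᵥ χ) =
      (-Complex.I) • contractLast N (majorana N (2 * N - 3) *ᵥ χ) := by
  have h3 : 2 * N - 3 = 2 * (N - 1) - 1 := by omega
  rw [h3, maj_even_mulVec' N N (N - 1) (by omega) le_rfl rfl,
      maj_odd_mulVec' N (N - 1) (N - 2) (by omega) (by omega) rfl]
  funext b
  simp only [contractLast, Pi.smul_apply, smul_eq_mul]
  rw [flip_appendTwo_last N hN b 0 0, flip_appendTwo_last N hN b 1 1,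
      flip_appendTwo_mid N hN b 0 0, flip_appendTwo_mid N hN b 1 1,
      appendTwo_last N hN b 0 0, appendTwo_last N hN b 1 1,
      dsign_appendTwo_succ N hN b 0 0, dsign_appendTwo_succ N hN b 1 1,
      dsign_appendTwo N (N - 2) le_rfl b 0 0, dsign_appendTwo N (N - 2) le_rfl b 1 1,
      show (1 : Fin 2) - 0 = 1 by decide, show (1 : Fin 2) - 1 = 0 by decide]
  simp only [bitSign, if_pos rfl, if_neg (by decide : (1 : Fin 2) ≠ 0), if_true]
  ring_nf
  try (simp only [Complex.I_sq]; ring_nf)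

lemma fuse_X (N : ℕ) (hN : 3 ≤ N) (χ : QVec N) :
    contractLast N (majorana N (2 * N - 1) *ᵥ χ) =
      (-Complex.I) • contractLast N (majorana N (2 * N - 2) *ᵥ χ) := by
  have h2 : 2 * N - 2 = 2 * (N - 1) := by omega
  rw [h2, maj_odd_mulVec' N N (N - 1) (by omega) le_rfl rfl,
      maj_even_mulVec' N (N - 1) (N - 2) (by omega) (by omega) rfl]
  funext b
  simp only [contractLast, Pi.smul_apply, smul_eq_mul]
  rw [flip_appendTwo_last N hN b 0 0, flip_appendTwo_last N hN b 1 1,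
      flip_appendTwo_mid N hN b 0 0, flip_appendTwo_mid N hN b 1 1,
      appendTwo_mid N hN b 0 0, appendTwo_mid N hN b 1 1,
      dsign_appendTwo_succ N hN b 0 0, dsign_appendTwo_succ N hN b 1 1,
      dsign_appendTwo N (N - 2) le_rfl b 0 0, dsign_appendTwo N (N - 2) le_rfl b 1 1,
      show (1 : Fin 2) - 0 = 1 by decide, show (1 : Fin 2) - 1 = 0 by decide]
  simp only [bitSign, if_pos rfl, if_neg (by decide : (1 : Fin 2) ≠ 0), if_true]
  ring_nf
  try (simp only [Complex.I_sq]; ring_nf)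

/-- contraction of the last two qubits fuses Majorana dimers and
multiplies their parities: (i) dimers not touching the contracted qubits survive;
(ii) dimers ending on Majorana modes `2N` and `2N−3` fuse with parity `p·q`;
(iii) dimers ending on Majorana modes `2N−1` and `2N−2` fuse with parity `p·q`. -/
theorem contraction_fuses_dimers (N : ℕ) (hN : 3 ≤ N) (χ : QVec N) (p q : ℂ)
    (hp : p = 1 ∨ p = -1) (hq : q = 1 ∨ q = -1) :
    (∀ j k : ℕ, 1 ≤ j → j < k → k ≤ 2 * N - 4 →
      (majorana N j + (Complex.I * p) • majorana N k) *ᵥ χ = 0 →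
      (majorana (N - 2) j + (Complex.I * p) • majorana (N - 2) k) *ᵥ
        contractLast N χ = 0) ∧
    (∀ a b : ℕ, 1 ≤ a → a < b → b ≤ 2 * N - 4 →
      (majorana N a + (Complex.I * p) • majorana N (2 * N)) *ᵥ χ = 0 →
      (majorana N b + (Complex.I * q) • majorana N (2 * N - 3)) *ᵥ χ = 0 →
      (majorana (N - 2) a + (Complex.I * (p * q)) • majorana (N - 2) b) *ᵥ
        contractLast N χ = 0) ∧
    (∀ c d : ℕ, 1 ≤ c → c < d → d ≤ 2 * N - 4 →
      (majorana N c + (Complex.I * p) • majorana N (2 * N - 1)) *ᵥ χ = 0 →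
      (majorana N d + (Complex.I * q) • majorana N (2 * N - 2)) *ᵥ χ = 0 →
      (majorana (N - 2) c + (Complex.I * (p * q)) • majorana (N - 2) d) *ᵥ
        contractLast N χ = 0) := by
  refine ⟨?_, ?_, ?_⟩
  · intro j k hj hjk hk hchi
    rw [Matrix.add_mulVec, Matrix.smul_mulVec,
      maj_contract_comm N j hN hj (by omega) χ,
      maj_contract_comm N k hN (by omega) (by omega) χ,
      ← contract_smul, ← contract_add]
    have h0 : majorana N j *ᵥ χ + (Complex.I * p) • (majorana N k *ᵥ χ) = 0 := by
      rw [← Matrix.smul_mulVec, ← Matrix.add_mulVec]; exact hchi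
    rw [h0, contract_zero]
  · intro a b ha hab hb h1 h2
    rw [Matrix.add_mulVec, Matrix.smul_mulVec] at h1 h2
    have h1' : majorana N a *ᵥ χ = -((Complex.I * p) • (majorana N (2 * N) *ᵥ χ)) :=
      eq_neg_of_add_eq_zero_left h1
    have h2' : majorana N b *ᵥ χ = -((Complex.I * q) • (majorana N (2 * N - 3) *ᵥ χ)) :=
      eq_neg_of_add_eq_zero_left h2
    rw [Matrix.add_mulVec, Matrix.smul_mulVec,
      maj_contract_comm N a hN ha (by omega) χ,
      maj_contract_comm N b hN (by omega) (by omega) χ,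
      h1', h2', contract_neg, contract_neg, contract_smul, contract_smul, fuse_Y N hN χ]
    funext x
    rcases hq with rfl | rfl <;>
      simp only [Pi.add_apply, Pi.neg_apply, Pi.smul_apply, Pi.zero_apply, smul_eq_mul] <;> ring
  · intro c d hc hcd hd h1 h2
    rw [Matrix.add_mulVec, Matrix.smul_mulVec] at h1 h2
    have h1' : majorana N c *ᵥ χ = -((Complex.I * p) • (majorana N (2 * N - 1) *ᵥ χ)) :=
      eq_neg_of_add_eq_zero_left h1
    have h2' : majorana N d *ᵥ χ = -((Complex.I * q) • (majorana N (2 * N - 2) *ᵥ χ)) :=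
      eq_neg_of_add_eq_zero_left h2
    rw [Matrix.add_mulVec, Matrix.smul_mulVec,
      maj_contract_comm N c hN hc (by omega) χ,
      maj_contract_comm N d hN (by omega) (by omega) χ,
      h1', h2', contract_neg, contract_neg, contract_smul, contract_smul, fuse_X N hN χ]
    funext x
    rcases hq with rfl | rfl <;>
      simp only [Pi.add_apply, Pi.neg_apply, Pi.smul_apply, Pi.zero_apply, smul_eq_mul] <;> ring

end
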